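/- arXiv:2409.16453 — 3 statements merged into one kernel-verified Lean document; each statement's English description precedes it below -/
import Mathlib

section
/- For every integer n ≥ 1 and every x in the open interval (-1, 1), the normalized Legendre polynomial satisfies |P̃_n(x)| < sqrt(2/π) · (1 - x²)^(-1/4), where P̃_n(x) = sqrt((2n+1)/2) · P_n(x) and P_n is the degree-n Legendre polynomial. -/
open Polynomial Real

/-- The classical Legendre polynomial of degree `n`, via Rodrigues' formula. -/
noncomputable def legendreP (n : ℕ) : Polynomial ℝ :=
  Polynomial.C (1 / (2 ^ n * (n.factorial : ℝ))) *
    (Polynomial.derivative^[n] ((Polynomial.X ^ 2 - 1) ^ n))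

/-- The `L²`-normalized Legendre polynomial. -/
noncomputable def legendreTilde (n : ℕ) (x : ℝ) : ℝ :=
  Real.sqrt ((2 * n + 1) / 2) * (legendreP n).eval x

/-!
The substitution `x = cos θ` turns the Legendre equation for `P = Pₙ` into `u'' + φ u = 0` for
`u θ = √(sin θ) P(cos θ)`, with `φ θ = n(n+1) + 1/4 + 1/(4 sin² θ)`. As `φ` decreases on
`(0, π/2]` and increases on `[π/2, π)`, the Sonin function `u² + u'²/φ` is largest at `π/2`, so
`√(1 - x²) P(x)² ≤ P(0)² + P'(0)²/(n(n+1) + 1/2)`. The right side is explicit in terms of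
`cₘ = C(2m, m)/4ᵐ`, and the bound `4/(π(2n+1))` for it follows from `cₘ²(m + 1/4)` increasing to
`1/π`, by Wallis' product.
-/

open Set Filter Topology

theorem isMaxOn_of_hasDerivAt_nonneg_of_nonpos {f f' : ℝ → ℝ} {a b c : ℝ}
    (hf : ∀ x ∈ Ioo a b, HasDerivAt f (f' x) x) (hc : c ∈ Ioo a b)
    (hleft : ∀ x ∈ Ioo a c, 0 ≤ f' x) (hright : ∀ x ∈ Ioo c b, f' x ≤ 0) :
    IsMaxOn f (Ioo a b) c := by
  have hcont : ContinuousOn f (Ioo a b) := fun x hx => (hf x hx).continuousAt.continuousWithinAt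
  rw [isMaxOn_iff]
  intro x hx
  rcases le_total x c with hxc | hcx
  · have hmono : MonotoneOn f (Ioc a c) := by
      refine monotoneOn_of_hasDerivWithinAt_nonneg (convex_Ioc a c)
        (hcont.mono (Ioc_subset_Ioo_right hc.2)) ?_ (by rwa [interior_Ioc])
      rw [interior_Ioc]
      exact fun x hx => (hf x ⟨hx.1, hx.2.trans hc.2⟩).hasDerivWithinAt
    exact hmono ⟨hx.1, hxc⟩ ⟨hc.1, le_rfl⟩ hxc
  · have hanti : AntitoneOn f (Ico c b) := by
      refine antitoneOn_of_hasDerivWithinAt_nonpos (convex_Ico c b)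
        (hcont.mono (Ico_subset_Ioo_left hc.1)) ?_ (by rwa [interior_Ico])
      rw [interior_Ico]
      exact fun x hx => (hf x ⟨hc.1.trans hx.1, hx.2⟩).hasDerivWithinAt
    exact hanti ⟨le_rfl, hc.2⟩ ⟨hcx, hx.2⟩ hcx

theorem HasDerivAt.sq_add_sq_div {u v φ : ℝ → ℝ} {φ' θ : ℝ} (hu : HasDerivAt u (v θ) θ)
    (hv : HasDerivAt v (-(φ θ * u θ)) θ) (hφ : HasDerivAt φ φ' θ) (hφ0 : φ θ ≠ 0) :
    HasDerivAt (fun t => u t ^ 2 + v t ^ 2 / φ t) (-(φ' * v θ ^ 2 / φ θ ^ 2)) θ := by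
  refine ((hu.fun_pow 2).fun_add ((hv.fun_pow 2).fun_div hφ hφ0)).congr_deriv ?_
  field_simp
  ring

lemma hasDerivAt_eval_cos (q : ℝ[X]) (θ : ℝ) :
    HasDerivAt (fun t => q.eval (cos t)) (-(sin θ * (derivative q).eval (cos θ))) θ :=
  ((q.hasDerivAt (cos θ)).comp θ (hasDerivAt_cos θ)).congr_deriv (by ring)

section LiouvilleNormalForm

variable (p : ℝ[X]) (ν : ℝ) {θ : ℝ}

noncomputable def liouvilleNormal (θ : ℝ) : ℝ := √(sin θ) * p.eval (cos θ)

noncomputable def liouvilleNormalDeriv (θ : ℝ) : ℝ :=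
  cos θ / (2 * √(sin θ)) * p.eval (cos θ) - sin θ * √(sin θ) * (derivative p).eval (cos θ)

noncomputable def liouvillePotential (θ : ℝ) : ℝ := ν + 1 / 4 + 1 / (4 * sin θ ^ 2)

lemma hasDerivAt_liouvilleNormal (hs : 0 < sin θ) :
    HasDerivAt (liouvilleNormal p) (liouvilleNormalDeriv p θ) θ := by
  refine (((hasDerivAt_sin θ).sqrt hs.ne').fun_mul (hasDerivAt_eval_cos p θ)).congr_deriv ?_
  rw [liouvilleNormalDeriv]
  field_simp
  rw [Real.sq_sqrt hs.le]
  ring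

lemma hasDerivAt_liouvilleNormalDeriv
    (hp : (X ^ 2 - 1) * derivative (derivative p) + 2 * X * derivative p = C ν * p)
    (hs : 0 < sin θ) :
    HasDerivAt (liouvilleNormalDeriv p)
      (-(liouvillePotential ν θ * liouvilleNormal p θ)) θ := by
  have hode := congrArg (eval (cos θ)) hp
  simp only [eval_add, eval_mul, eval_sub, eval_pow, eval_X, eval_one, eval_ofNat, eval_C] at hode
  have hsqrt := (hasDerivAt_sin θ).sqrt hs.ne'
  refine ((((hasDerivAt_cos θ).fun_div (hsqrt.const_mul 2) (by positivity)).fun_mul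
    (hasDerivAt_eval_cos p θ)).fun_sub (((hasDerivAt_sin θ).fun_mul hsqrt).fun_mul
    (hasDerivAt_eval_cos (derivative p) θ))).congr_deriv ?_
  have ht : √(sin θ) ≠ 0 := by positivity
  have hsq : √(sin θ) ^ 2 = sin θ := Real.sq_sqrt hs.le
  have hpyth := sin_sq_add_cos_sq θ
  rw [liouvillePotential, liouvilleNormal]
  set t := √(sin θ)
  rw [← hsq] at hpyth ⊢
  field_simp
  linear_combination (-16 * t ^ 4) * hode +
    (16 * t ^ 4 * (derivative (derivative p)).eval (cos θ) - 4 * p.eval (cos θ)) * hpyth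

lemma hasDerivAt_liouvillePotential (hs : sin θ ≠ 0) :
    HasDerivAt (liouvillePotential ν) (-(cos θ / (2 * sin θ ^ 3))) θ := by
  refine (((hasDerivAt_const θ 1).fun_div (((hasDerivAt_sin θ).fun_pow 2).const_mul 4)
    (by positivity)).const_add (ν + 1 / 4)).congr_deriv ?_
  field_simp
  ring

lemma liouvillePotential_pos (hν : 0 ≤ ν) (θ : ℝ) : 0 < liouvillePotential ν θ := by
  rw [liouvillePotential]
  positivity

theorem sqrt_one_sub_sq_mul_eval_sq_le
    (hp : (X ^ 2 - 1) * derivative (derivative p) + 2 * X * derivative p = C ν * p)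
    (hν : 0 ≤ ν) {x : ℝ} (hx : x ∈ Ioo (-1 : ℝ) 1) :
    √(1 - x ^ 2) * p.eval x ^ 2 ≤ p.eval 0 ^ 2 + (derivative p).eval 0 ^ 2 / (ν + 1 / 2) := by
  set u := liouvilleNormal p with hu
  set v := liouvilleNormalDeriv p with hv
  set φ := liouvillePotential ν with hφdef
  have hφ := liouvillePotential_pos ν hν
  have hsin : ∀ θ ∈ Ioo 0 π, 0 < sin θ := fun θ hθ => sin_pos_of_pos_of_lt_pi hθ.1 hθ.2
  have hF : ∀ θ ∈ Ioo 0 π, HasDerivAt (fun t => u t ^ 2 + v t ^ 2 / φ t)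
      (cos θ * (v θ ^ 2 / (2 * sin θ ^ 3 * φ θ ^ 2))) θ := fun θ hθ =>
    ((hasDerivAt_liouvilleNormal p (hsin θ hθ)).sq_add_sq_div
      (hasDerivAt_liouvilleNormalDeriv p ν hp (hsin θ hθ))
      (hasDerivAt_liouvillePotential ν (hsin θ hθ).ne') (hφ θ).ne').congr_deriv (by ring)
  have hF' : ∀ θ ∈ Ioo 0 π, 0 ≤ v θ ^ 2 / (2 * sin θ ^ 3 * φ θ ^ 2) := fun θ hθ => by
    have := hsin θ hθ
    positivity
  have hmax : IsMaxOn (fun t => u t ^ 2 + v t ^ 2 / φ t) (Ioo 0 π) (π / 2) := by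
    refine isMaxOn_of_hasDerivAt_nonneg_of_nonpos hF ⟨pi_div_two_pos, half_lt_self pi_pos⟩
      (fun θ hθ => mul_nonneg ?_ (hF' θ ⟨hθ.1, hθ.2.trans (half_lt_self pi_pos)⟩))
      (fun θ hθ => mul_nonpos_of_nonpos_of_nonneg ?_
        (hF' θ ⟨pi_div_two_pos.trans hθ.1, hθ.2⟩))
    · exact cos_nonneg_of_mem_Icc ⟨by linarith [hθ.1, pi_pos], hθ.2.le⟩
    · exact cos_nonpos_of_pi_div_two_le_of_le hθ.1.le (by linarith [hθ.2, pi_pos])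
  have hθ : arccos x ∈ Ioo 0 π := ⟨arccos_pos.mpr hx.2, arccos_lt_pi.mpr hx.1⟩
  calc √(1 - x ^ 2) * p.eval x ^ 2 = u (arccos x) ^ 2 := by
        rw [hu, liouvilleNormal, mul_pow, sq_sqrt (hsin _ hθ).le, sin_arccos,
          cos_arccos hx.1.le hx.2.le]
    _ ≤ u (arccos x) ^ 2 + v (arccos x) ^ 2 / φ (arccos x) :=
        le_add_of_nonneg_right (div_nonneg (sq_nonneg _) (hφ _).le)
    _ ≤ u (π / 2) ^ 2 + v (π / 2) ^ 2 / φ (π / 2) := hmax hθ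
    _ = p.eval 0 ^ 2 + (derivative p).eval 0 ^ 2 / (ν + 1 / 2) := by
        simp only [hu, hv, hφdef, liouvilleNormal, liouvilleNormalDeriv, liouvillePotential,
          sin_pi_div_two, cos_pi_div_two, sqrt_one]
        ring

end LiouvilleNormalForm

lemma X_sq_sub_one_mul_derivative_pow {R : Type*} [CommRing R] (n : ℕ) :
    (X ^ 2 - 1 : R[X]) * derivative ((X ^ 2 - 1) ^ n) = C (2 * n : R) * X * (X ^ 2 - 1) ^ n := by
  cases n with
  | zero => simp
  | succ n =>
    rw [derivative_pow_succ]
    simp only [derivative_sub, derivative_X_pow, derivative_one, map_mul, map_add, map_natCast,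
      map_one, map_ofNat]
    push_cast
    ring

theorem legendreP_ode (n : ℕ) :
    (X ^ 2 - 1) * derivative (derivative (legendreP n)) + 2 * X * derivative (legendreP n) =
      C ((n : ℝ) * (n + 1)) * legendreP n := by
  set w : ℝ[X] := (X ^ 2 - 1) ^ n
  have h1 := congrArg derivative (X_sq_sub_one_mul_derivative_pow (R := ℝ) n)
  have h2 : derivative^[2] w * X ^ 2 =
      derivative^[2] w + C (2 * n - 2 : ℝ) * (derivative w * X) + C (2 * n : ℝ) * w := by
    simp only [derivative_mul, derivative_sub, derivative_X_pow, derivative_one, derivative_C,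
      derivative_X] at h1
    simp only [Function.iterate_succ, Function.iterate_zero, Function.comp_apply, id, map_sub,
      map_mul, map_natCast, map_ofNat] at h1 ⊢
    linear_combination h1
  have h3 := congrArg (derivative^[n]) h2
  simp only [iterate_map_add, iterate_derivative_C_mul, iterate_derivative_derivative_mul_X_sq,
    iterate_derivative_derivative_mul_X, nsmul_eq_mul] at h3
  simp only [legendreP, derivative_C_mul, ← Function.iterate_succ_apply' derivative]
  have hc : ((n * (n - 1) : ℕ) : ℝ[X]) = C ((n : ℝ) * (n - 1)) := by
    rcases n with _ | n <;> simp
  rw [← Function.iterate_add_apply, hc] at h3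
  simp only [Nat.succ_eq_add_one, map_sub, map_mul, map_add, map_natCast, map_ofNat, map_one,
    Nat.cast_mul, Nat.cast_ofNat] at h3 ⊢
  linear_combination C (1 / (2 ^ n * n.factorial : ℝ)) * h3

lemma X_sq_sub_one_pow_eq_expand {R : Type*} [CommRing R] (n : ℕ) :
    (X ^ 2 - 1 : R[X]) ^ n = expand R 2 ((X + C (-1)) ^ n) := by
  simp [sub_eq_add_neg]

lemma coeff_X_sq_sub_one_pow_two_mul {R : Type*} [CommRing R] (n k : ℕ) :
    ((X ^ 2 - 1 : R[X]) ^ n).coeff (2 * k) = (-1) ^ (n - k) * n.choose k := by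
  rw [X_sq_sub_one_pow_eq_expand, coeff_expand two_pos, if_pos (dvd_mul_right 2 k),
    Nat.mul_div_cancel_left k two_pos, coeff_X_add_C_pow]

lemma coeff_X_sq_sub_one_pow_two_mul_add_one {R : Type*} [CommRing R] (n k : ℕ) :
    ((X ^ 2 - 1 : R[X]) ^ n).coeff (2 * k + 1) = 0 := by
  rw [X_sq_sub_one_pow_eq_expand, coeff_expand two_pos, if_neg (by omega)]

lemma coeff_legendreP (n j : ℕ) :
    (legendreP n).coeff j =
      (j + n).descFactorial n / (2 ^ n * n.factorial) * ((X ^ 2 - 1 : ℝ[X]) ^ n).coeff (j + n) := by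
  rw [legendreP, coeff_C_mul, coeff_iterate_derivative, nsmul_eq_mul]
  ring

lemma eval_zero_legendreP_two_mul (m : ℕ) :
    (legendreP (2 * m)).eval 0 = (-1) ^ m * (m.centralBinom / 4 ^ m) := by
  rw [← coeff_zero_eq_eval_zero, coeff_legendreP, zero_add, coeff_X_sq_sub_one_pow_two_mul,
    Nat.descFactorial_self, Nat.centralBinom_eq_two_mul_choose, show 2 * m - m = m by omega,
    pow_mul]
  have : ((2 * m).factorial : ℝ) ≠ 0 := by positivity
  field_simp
  ring

lemma eval_zero_legendreP_two_mul_add_one (m : ℕ) : (legendreP (2 * m + 1)).eval 0 = 0 := by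
  rw [← coeff_zero_eq_eval_zero, coeff_legendreP, zero_add,
    coeff_X_sq_sub_one_pow_two_mul_add_one, mul_zero]

lemma eval_zero_derivative_eq_coeff_one (p : ℝ[X]) : (derivative p).eval 0 = p.coeff 1 := by
  rw [← coeff_zero_eq_eval_zero, coeff_derivative]
  simp

lemma eval_zero_derivative_legendreP_two_mul (m : ℕ) :
    (derivative (legendreP (2 * m))).eval 0 = 0 := by
  rw [eval_zero_derivative_eq_coeff_one, coeff_legendreP, add_comm,
    coeff_X_sq_sub_one_pow_two_mul_add_one, mul_zero]

lemma eval_zero_derivative_legendreP_two_mul_add_one (m : ℕ) :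
    (derivative (legendreP (2 * m + 1))).eval 0 =
      (-1) ^ m * ((2 * m + 1) * (m.centralBinom / 4 ^ m)) := by
  rw [eval_zero_derivative_eq_coeff_one, coeff_legendreP,
    show 1 + (2 * m + 1) = 2 * (m + 1) by ring, coeff_X_sq_sub_one_pow_two_mul,
    show 2 * m + 1 - (m + 1) = m by omega, show 2 * (m + 1) = 2 * m + 2 by ring]
  have hdesc : (2 * m + 2).descFactorial (2 * m + 1) = (2 * m + 2) * (2 * m + 1).factorial := by
    simpa [Nat.factorial_succ] using
      Nat.factorial_mul_descFactorial (show 2 * m + 1 ≤ 2 * m + 2 by omega)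
  have hchoose : ((2 * m + 1).choose (m + 1) : ℝ) * (m + 1) = (2 * m + 1) * m.centralBinom := by
    rw [Nat.centralBinom_eq_two_mul_choose]
    exact_mod_cast (Nat.add_one_mul_choose_eq (2 * m) m).symm
  have : ((2 * m + 1).factorial : ℝ) ≠ 0 := by positivity
  rw [hdesc, pow_succ, pow_mul, show (2 : ℝ) ^ 2 = 4 by norm_num]
  field_simp
  push_cast
  linear_combination 2 * ((2 * m + 1).factorial : ℝ) * hchoose

lemma centralBinom_succ_div_four_pow (m : ℕ) :
    ((m + 1).centralBinom : ℝ) / 4 ^ (m + 1) =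
      m.centralBinom / 4 ^ m * ((2 * m + 1) / (2 * m + 2)) := by
  have h : ((m + 1 : ℕ) : ℝ) * (m + 1).centralBinom = 2 * (2 * m + 1) * m.centralBinom := by
    exact_mod_cast Nat.succ_mul_centralBinom_succ m
  push_cast at h
  rw [pow_succ]
  field_simp
  linear_combination 2 * h

lemma sq_centralBinom_div_four_pow (m : ℕ) :
    ((m.centralBinom : ℝ) / 4 ^ m) ^ 2 = 1 / ((2 * m + 1) * Real.Wallis.W m) := by
  induction m with
  | zero => simp [Real.Wallis.W]
  | succ m ih =>
    rw [centralBinom_succ_div_four_pow, Real.Wallis.W_succ, mul_pow, ih]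
    push_cast
    field_simp
    ring

lemma strictMono_sq_centralBinom_div_four_pow_mul :
    StrictMono fun m : ℕ => ((m.centralBinom : ℝ) / 4 ^ m) ^ 2 * (m + 1 / 4) := by
  refine strictMono_nat_of_lt_succ fun m => ?_
  have hc : 0 < ((m.centralBinom : ℝ) / 4 ^ m) ^ 2 := by
    have := m.centralBinom_pos
    positivity
  simp only [centralBinom_succ_div_four_pow, mul_pow, mul_assoc]
  push_cast
  refine mul_lt_mul_of_pos_left ?_ hc
  rw [div_pow, div_mul_eq_mul_div, lt_div_iff₀ (by positivity)]
  nlinarith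

lemma tendsto_sq_centralBinom_div_four_pow_mul :
    Tendsto (fun m : ℕ => ((m.centralBinom : ℝ) / 4 ^ m) ^ 2 * (m + 1 / 4)) atTop (𝓝 (1 / π)) := by
  have hrat : Tendsto (fun m : ℕ => (1 / 4 + 1 * (m : ℝ)) / (1 + 2 * m)) atTop (𝓝 (1 / 2)) :=
    tendsto_add_mul_div_add_mul_atTop_nhds _ _ _ two_ne_zero
  have hW := Real.Wallis.tendsto_W_nhds_pi_div_two.inv₀ (by positivity)
  convert hrat.mul hW using 1
  · ext m
    have := Real.Wallis.W_pos m
    rw [sq_centralBinom_div_four_pow]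
    field_simp
    ring
  · field_simp

lemma sq_centralBinom_div_four_pow_mul_lt (m : ℕ) :
    ((m.centralBinom : ℝ) / 4 ^ m) ^ 2 * (m + 1 / 4) < 1 / π :=
  (strictMono_sq_centralBinom_div_four_pow_mul (lt_add_one m)).trans_le
    (strictMono_sq_centralBinom_div_four_pow_mul.monotone.ge_of_tendsto
      tendsto_sq_centralBinom_div_four_pow_mul (m + 1))

lemma eval_zero_legendreP_sq_add_div_lt (n : ℕ) :
    (legendreP n).eval 0 ^ 2 + (derivative (legendreP n)).eval 0 ^ 2 / (n * (n + 1) + 1 / 2) <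
      4 / (π * (2 * n + 1)) := by
  have hsign (m : ℕ) : ((-1 : ℝ) ^ m) ^ 2 = 1 := by
    rw [pow_right_comm, neg_one_sq, one_pow]
  obtain ⟨m, rfl | rfl⟩ := Nat.even_or_odd' n
  · have h := (lt_div_iff₀ pi_pos).mp (sq_centralBinom_div_four_pow_mul_lt m)
    rw [eval_zero_legendreP_two_mul, eval_zero_derivative_legendreP_two_mul, mul_pow, hsign,
      lt_div_iff₀ (by positivity)]
    push_cast
    linear_combination 4 * h
  · have h := (lt_div_iff₀ pi_pos).mp (sq_centralBinom_div_four_pow_mul_lt (m + 1))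
    rw [eval_zero_legendreP_two_mul_add_one, eval_zero_derivative_legendreP_two_mul_add_one,
      mul_pow, hsign, one_mul, mul_pow, zero_pow two_ne_zero, zero_add,
      div_lt_div_iff₀ (by positivity) (by positivity)]
    rw [centralBinom_succ_div_four_pow, mul_pow] at h
    set c := ((m.centralBinom : ℝ) / 4 ^ m) ^ 2
    have hc : 0 < c := by have := m.centralBinom_pos; positivity
    push_cast at h ⊢
    field_simp at h
    nlinarith [pi_pos, mul_pos hc pi_pos]

lemma sq_rpow_neg_one_div_four {y : ℝ} (hy : 0 ≤ y) : (y ^ (-(1 / 4 : ℝ))) ^ 2 = (√y)⁻¹ := by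
  rw [← rpow_natCast, ← rpow_mul hy, sqrt_eq_rpow, ← rpow_neg hy]
  norm_num

theorem bernstein_legendre_general (n : ℕ) (x : ℝ) (hx : x ∈ Set.Ioo (-1 : ℝ) 1) :
    |legendreTilde n x| < Real.sqrt (2 / Real.pi) * (1 - x ^ 2) ^ (-(1 / 4 : ℝ)) := by
  have hy : 0 < 1 - x ^ 2 := by nlinarith [hx.1, hx.2]
  have hbound : √(1 - x ^ 2) * (legendreP n).eval x ^ 2 < 4 / (π * (2 * n + 1)) :=
    (sqrt_one_sub_sq_mul_eval_sq_le _ _ (legendreP_ode n) (by positivity) hx).trans_lt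
      (eval_zero_legendreP_sq_add_div_lt n)
  refine abs_lt_of_sq_lt_sq ?_ (by positivity)
  rw [legendreTilde, mul_pow, mul_pow, sq_sqrt (by positivity), sq_sqrt (by positivity),
    sq_rpow_neg_one_div_four hy.le]
  calc (2 * n + 1) / 2 * (legendreP n).eval x ^ 2
      = (2 * n + 1) / (2 * √(1 - x ^ 2)) * (√(1 - x ^ 2) * (legendreP n).eval x ^ 2) := by
        field_simp
    _ < (2 * n + 1) / (2 * √(1 - x ^ 2)) * (4 / (π * (2 * n + 1))) := by gcongr
    _ = 2 / π * (√(1 - x ^ 2))⁻¹ := by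
        field_simp
        ring

/-- Bernstein's inequality for normalized Legendre polynomials. -/
theorem bernstein_legendre (n : ℕ) (hn : 1 ≤ n) (x : ℝ) (hx : x ∈ Set.Ioo (-1 : ℝ) 1) :
    |legendreTilde n x| < Real.sqrt (2 / Real.pi) * (1 - x ^ 2) ^ (-(1 / 4 : ℝ)) :=
  bernstein_legendre_general n x hx
end

section
/- For θ ∈ (0, π/2] and every integer n ≥ 0, the quantity sin((n+1)θ)/sqrt(sin θ) is bounded above by sqrt(2(n+1)). -/
open Real

/-- For `θ ∈ (0, π/2]` and `n ≥ 0`, `sin((n+1)θ)/√(sin θ) ≤ √(2(n+1))`. -/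
theorem sin_ratio_bound (θ : ℝ) (hθ : θ ∈ Set.Ioc 0 (Real.pi / 2)) (n : ℕ) :
    Real.sin (((n : ℝ) + 1) * θ) / Real.sqrt (Real.sin θ) ≤
      Real.sqrt (2 * ((n : ℝ) + 1)) := by
  obtain ⟨hθ0, hθπ⟩ := hθ
  set N : ℝ := (n : ℝ) + 1 with hNdef
  have hN : 1 ≤ N := by have := Nat.cast_nonneg (α := ℝ) n; linarith
  have hpi : Real.pi ≤ 4 := Real.pi_le_four
  have hs : 2 / Real.pi * θ ≤ Real.sin θ := Real.mul_le_sin hθ0.le hθπ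
  have hs0 : 0 < Real.sin θ := Real.sin_pos_of_pos_of_lt_pi hθ0
    (lt_of_le_of_lt hθπ (by linarith [Real.pi_pos]))
  rw [div_le_iff₀ (Real.sqrt_pos.2 hs0)]
  have key : Real.sin (N * θ) ≤ Real.sqrt (N * θ) := by
    rcases le_total (N * θ) 1 with h | h
    · calc Real.sin (N * θ) ≤ N * θ := Real.sin_le (by positivity)
        _ ≤ Real.sqrt (N * θ) := by
            nlinarith [Real.sq_sqrt (show (0:ℝ) ≤ N * θ by positivity),
              Real.sqrt_nonneg (N * θ)]
    · calc Real.sin (N * θ) ≤ 1 := Real.sin_le_one _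
        _ ≤ Real.sqrt (N * θ) := by
            rw [show (1:ℝ) = Real.sqrt 1 from (Real.sqrt_one).symm]
            exact Real.sqrt_le_sqrt h
  calc Real.sin (N * θ) ≤ Real.sqrt (N * θ) := key
    _ ≤ Real.sqrt (2 * N * Real.sin θ) := by
        apply Real.sqrt_le_sqrt
        have hpi0 := Real.pi_pos
        have : θ / 2 ≤ Real.sin θ := by
          calc θ / 2 ≤ 2 / Real.pi * θ := by
                rw [div_mul_eq_mul_div, div_le_div_iff₀ two_pos hpi0]
                nlinarith
            _ ≤ Real.sin θ := hs
        nlinarith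
    _ = Real.sqrt (2 * N) * Real.sqrt (Real.sin θ) := by
        rw [← Real.sqrt_mul (by positivity), mul_assoc]
end

section
/- Let (u_n) be an orthonormal sequence in L²([0,1]) and (σ_n) a nonnegative sequence with σ_n ≤ C n^{−α} for some α > 1/2 and C > 0. Then there exist δ > ε > 0 such that the series ∑_{n=1}^∞ (σ_n |u_n(x)|)^{2−ε} converges for almost every x ∈ [0,1]. -/
open MeasureTheory Filter

/-- Key technical step: if `(u_n)` is orthonormal in `L²([0,1])` and `σ_n ≤ C n^{-α}`
with `α > 1/2`, then for some `δ > ε > 0` the series `∑ (σ_n |u_n(x)|)^{2-ε}` converges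
for a.e. `x ∈ [0,1]`. -/
theorem weighted_orthonormal_summable_ae
    (u : ℕ → ℝ → ℝ) (hmeas : ∀ n, Measurable (u n))
    (hortho : ∀ m n : ℕ, ∫ x in (0:ℝ)..1, u m x * u n x = if m = n then 1 else 0)
    (σ : ℕ → ℝ) (hσ0 : ∀ n, 0 ≤ σ n)
    (C α : ℝ) (hC : 0 < C) (hα : 1 / 2 < α)
    (hσ : ∀ n : ℕ, σ n ≤ C * ((n : ℝ) + 1) ^ (-α)) :
    ∃ δ ε : ℝ, ε < δ ∧ 0 < ε ∧
      ∀ᵐ x ∂(volume.restrict (Set.Icc (0:ℝ) 1)),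
        Summable (fun n : ℕ => (σ n * |u n x|) ^ (2 - ε)) := by
  have hα0 : (0:ℝ) < α := by linarith
  set ε : ℝ := 1 - 1/(2*α) with hεdef
  have hε0 : 0 < ε := by
    have : 1/(2*α) < 1 := by
      rw [div_lt_one (by linarith)]; linarith
    simp only [hεdef]; linarith
  have hε1 : ε < 1 := by
    have : 0 < 1/(2*α) := by positivity
    simp only [hεdef]; linarith
  refine ⟨2, ε, by linarith, hε0, ?_⟩
  set p : ℝ := 2 - ε with hpdef
  have hp1 : 1 < p := by simp only [hpdef]; linarith
  have hp2 : p ≤ 2 := by simp only [hpdef]; linarith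
  have hp0 : 0 ≤ p := by linarith
  have hαp : 1 < α * p := by
    have : α * p = α + 1/2 := by
      simp only [hpdef, hεdef]; field_simp; ring
    rw [this]; linarith
  -- integrability of u n * u n on Ioc 0 1
  have hint : ∀ n, IntegrableOn (fun x => u n x * u n x) (Set.Ioc (0:ℝ) 1) volume := by
    intro n
    by_contra h
    have h1 := hortho n n
    rw [if_pos rfl, intervalIntegral.integral_of_le (by norm_num)] at h1
    rw [integral_undef h] at h1
    norm_num at h1
  have hnorm : ∀ n, ∫ x in Set.Ioc (0:ℝ) 1, u n x * u n x = 1 := by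
    intro n
    have h1 := hortho n n
    rwa [if_pos rfl, intervalIntegral.integral_of_le (by norm_num)] at h1
  -- switch to Ioc
  rw [(Measure.restrict_congr_set MeasureTheory.Ioc_ae_eq_Icc).symm]
  set F : ℕ → ℝ → ENNReal := fun n x => ENNReal.ofReal ((σ n * |u n x|) ^ p) with hF
  have hFmeas : ∀ n, Measurable (F n) := fun n =>
    ENNReal.measurable_ofReal.comp (((hmeas n).abs.const_mul _).pow_const p)
  -- per-n bound
  have hbound : ∀ n, ∫⁻ x in Set.Ioc (0:ℝ) 1, F n x ≤ ENNReal.ofReal (σ n ^ p * 2) := by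
    intro n
    have hptwise : ∀ x, F n x ≤ ENNReal.ofReal (σ n ^ p * (1 + u n x * u n x)) := by
      intro x
      apply ENNReal.ofReal_le_ofReal
      rw [Real.mul_rpow (hσ0 n) (abs_nonneg _)]
      apply mul_le_mul_of_nonneg_left _ (Real.rpow_nonneg (hσ0 n) p)
      rcases le_or_gt (|u n x|) 1 with h | h
      · have := Real.rpow_le_one (abs_nonneg _) h hp0
        nlinarith [sq_nonneg (u n x)]
      · have h1 : |u n x| ^ p ≤ |u n x| ^ (2:ℝ) :=
          Real.rpow_le_rpow_of_exponent_le h.le hp2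
        have h2 : |u n x| ^ (2:ℝ) = u n x * u n x := by
          rw [show (2:ℝ) = ((2:ℕ):ℝ) by norm_num, Real.rpow_natCast, sq_abs, sq]
        nlinarith
    calc ∫⁻ x in Set.Ioc (0:ℝ) 1, F n x
        ≤ ∫⁻ x in Set.Ioc (0:ℝ) 1, ENNReal.ofReal (σ n ^ p * (1 + u n x * u n x)) :=
          lintegral_mono fun x => hptwise x
      _ = ENNReal.ofReal (∫ x in Set.Ioc (0:ℝ) 1, σ n ^ p * (1 + u n x * u n x)) := by
          rw [ofReal_integral_eq_lintegral_ofReal]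
          · exact (((integrable_const 1).add (hint n)).const_mul _)
          · filter_upwards with x
            have h1 : (0:ℝ) ≤ 1 + u n x * u n x := by nlinarith [sq_nonneg (u n x)]
            exact mul_nonneg (Real.rpow_nonneg (hσ0 n) p) h1
      _ = ENNReal.ofReal (σ n ^ p * 2) := by
          congr 1
          rw [integral_const_mul, integral_add (integrable_const 1) (hint n), hnorm n,
            integral_const]
          norm_num [Real.volume_Ioc]
  -- summability of the bound
  have hsum : Summable (fun n : ℕ => σ n ^ p * 2) := by
    have hs : Summable (fun n : ℕ => ((n:ℝ)+1) ^ (-(α*p))) := by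
      have h0 : Summable (fun n : ℕ => (n:ℝ) ^ (-(α*p))) :=
        Real.summable_nat_rpow.mpr (by linarith)
      have := (summable_nat_add_iff 1).mpr h0
      refine this.congr fun n => ?_
      push_cast
      ring_nf
    apply Summable.mul_right
    apply Summable.of_nonneg_of_le (fun n => Real.rpow_nonneg (hσ0 n) p)
      (fun n => ?_) (hs.mul_left (C ^ p))
    have hb : (0:ℝ) ≤ ((n:ℝ)+1) ^ (-α) := Real.rpow_nonneg (by positivity) _
    calc σ n ^ p ≤ (C * ((n:ℝ)+1) ^ (-α)) ^ p :=
          Real.rpow_le_rpow (hσ0 n) (hσ n) hp0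
      _ = C ^ p * ((n:ℝ)+1) ^ (-(α*p)) := by
          rw [Real.mul_rpow hC.le hb, ← Real.rpow_mul (by positivity : (0:ℝ) ≤ (n:ℝ)+1)]
          ring_nf
  have hkey : ∑' n, ∫⁻ x in Set.Ioc (0:ℝ) 1, F n x ≠ ⊤ := by
    apply ne_top_of_le_ne_top _ (ENNReal.tsum_le_tsum hbound)
    rw [← ENNReal.ofReal_tsum_of_nonneg
      (fun n => mul_nonneg (Real.rpow_nonneg (hσ0 n) p) (by norm_num)) hsum]
    exact ENNReal.ofReal_ne_top
  have hae : ∀ᵐ x ∂(volume.restrict (Set.Ioc (0:ℝ) 1)), ∑' n, F n x < ⊤ := by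
    apply ae_lt_top (Measurable.ennreal_tsum hFmeas)
    rwa [lintegral_tsum (fun n => (hFmeas n).aemeasurable)]
  filter_upwards [hae] with x hx
  have hsumm := ENNReal.summable_toReal hx.ne
  refine hsumm.congr fun n => ?_
  simp only [hF, ENNReal.toReal_ofReal (Real.rpow_nonneg (mul_nonneg (hσ0 n) (abs_nonneg _)) p)]
end
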